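/- Let 𝔫 be the 11-dimensional nilpotent Lie algebra with basis X₁,…,X₅, Y₁,…,Y₅, Z and nonzero basis brackets (up to antisymmetry) [X₁,X₂]=X₃, [X₁,X₃]=X₄, [X₁,X₄]=X₅, [X₂,X₃]=X₅, [Y₁,Y₂]=Y₃, [Y₁,Y₃]=Y₄, [Y₁,Y₄]=Y₅, [Y₂,Y₃]=Y₅, [X₁,Y₁]=Z, [X₂,Y₂]=Z. Then: (a) the diagonal map D with D(Xᵢ) = i Xᵢ, D(Yⱼ) = −j Yⱼ (1 ≤ i,j ≤ 5) and D(Z) = 0 is a nonzero derivation of 𝔫 diagonalizable over ℝ; (b) every derivation of 𝔫 has trace 0; moreover (c) every derivation of 𝔫 which is diagonalizable over ℝ and commutes with D is a real scalar multiple of D. -/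

import Mathlib

open scoped BigOperators

namespace RNPaper

/-- Structure constants of a skew-symmetric algebra on `ℝⁿ`:
an element of `V = Λ²(ℝⁿ)*⊗ℝⁿ` written in the basis `μ_{ijk}`. -/
abbrev SC (n : ℕ) := Fin n → Fin n → Fin n → ℝ

variable {n : ℕ}

def IsAntisym (c : SC n) : Prop := ∀ i j k, c j i k = - c i j k

/-- The bilinear map `ℝⁿ×ℝⁿ→ℝⁿ` associated to the structure constants `c`. -/
def br (c : SC n) (x y : Fin n → ℝ) : Fin n → ℝ :=
  fun k => ∑ i, ∑ j, x i * y j * c i j k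

def IsJacobi (c : SC n) : Prop :=
  ∀ x y z : Fin n → ℝ,
    br c (br c x y) z + br c (br c y z) x + br c (br c z x) y = 0

def nest (c : SC n) (v : ℕ → (Fin n → ℝ)) : ℕ → (Fin n → ℝ)
  | 0 => v 0
  | k + 1 => br c (v (k + 1)) (nest c v k)

def IsNilpotentBracket (c : SC n) : Prop :=
  ∃ N : ℕ, ∀ v : ℕ → (Fin n → ℝ), nest c v N = 0

/-- `c` is the Lie bracket of a nilpotent Lie algebra. -/
def IsNilpotentLie (c : SC n) : Prop := IsAntisym c ∧ IsJacobi c ∧ IsNilpotentBracket c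

/-- `D` is a derivation of the algebra with structure constants `c`. -/
def IsDeriv (c : SC n) (D : Matrix (Fin n) (Fin n) ℝ) : Prop :=
  ∀ x y : Fin n → ℝ,
    D.mulVec (br c x y) = br c (D.mulVec x) y + br c x (D.mulVec y)

/-- The inner product on `V` making the basis `μ_{ijk}` (`i<j`) orthonormal. -/
def innerV (c d : SC n) : ℝ := ∑ i, ∑ j, ∑ k, if i < j then c i j k * d i j k else 0

/-- The inner product `⟨A,B⟩ = tr(ABᵀ)` on matrices. -/
def innerM (A B : Matrix (Fin n) (Fin n) ℝ) : ℝ := ∑ a, ∑ b, A a b * B a b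

/-- The `gl(n,ℝ)`-action `E·μ = Eμ(·,·) − μ(E·,·) − μ(·,E·)`. -/
def lieAct (E : Matrix (Fin n) (Fin n) ℝ) (c : SC n) : SC n :=
  fun i j k => (∑ l, E k l * c i j l) - (∑ p, E p i * c p j k) - (∑ p, E p j * c i p k)

/-- The `GL(n,ℝ)`-action `(g·μ)(v,w) = g μ(g⁻¹v, g⁻¹w)` in structure constants. -/
def glAct (g : GL (Fin n) ℝ) (c : SC n) : SC n :=
  fun i j k => ∑ p, ∑ q, ∑ l,
    ((g⁻¹ : GL (Fin n) ℝ) : Matrix (Fin n) (Fin n) ℝ) p i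
      * ((g⁻¹ : GL (Fin n) ℝ) : Matrix (Fin n) (Fin n) ℝ) q j
      * ((g : Matrix (Fin n) (Fin n) ℝ) k l) * c p q l

/-- `m` is the moment map: `⟨m(μ),E⟩ = |μ|⁻²⟨E·μ,μ⟩` for all symmetric `E` and `μ ≠ 0`,
with `m(μ)` a symmetric matrix. -/
def IsMomentMap (m : SC n → Matrix (Fin n) (Fin n) ℝ) : Prop :=
  ∀ c : SC n, c ≠ 0 →
    (m c).IsSymm ∧
      ∀ E : Matrix (Fin n) (Fin n) ℝ, E.IsSymm →
        innerM (m c) E = (innerV c c)⁻¹ * innerV (lieAct E c) c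

/-- The centralizer of `D` in `GL(n,ℝ)`. -/
def centralizerSet (D : Matrix (Fin n) (Fin n) ℝ) : Set (GL (Fin n) ℝ) :=
  {g | (g : Matrix (Fin n) (Fin n) ℝ) * D = D * (g : Matrix (Fin n) (Fin n) ℝ)}

lemma one_mem_centralizerSet (D : Matrix (Fin n) (Fin n) ℝ) :
    (1 : GL (Fin n) ℝ) ∈ centralizerSet D := by
  simp [centralizerSet]

/-- `G_D`: the identity component of the centralizer of `D` in `GL(n,ℝ)`. -/
def GD (D : Matrix (Fin n) (Fin n) ℝ) : Set (GL (Fin n) ℝ) :=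
  Subtype.val '' connectedComponent (⟨1, one_mem_centralizerSet D⟩ : centralizerSet D)

/-- The orbit of `c` under a set `S ⊆ GL(n,ℝ)`. -/
def orbitOf (S : Set (GL (Fin n) ℝ)) (c : SC n) : Set (SC n) :=
  (fun g => glAct g c) '' S

noncomputable def diagAct (d : Fin n → ℝ) (c : SC n) : SC n :=
  fun i j k => (d k / (d i * d j)) * c i j k

/-- The orbit `T·μ` of the subgroup of diagonal matrices with positive entries. -/
def Torbit (c : SC n) : Set (SC n) :=
  {x | ∃ d : Fin n → ℝ, (∀ i, 0 < d i) ∧ x = diagAct d c}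

/-- The weight `F_{ij}^k = E_kk − E_ii − E_jj`. -/
def Fwt (i j k : Fin n) : Matrix (Fin n) (Fin n) ℝ :=
  Matrix.single k k 1 - Matrix.single i i 1 - Matrix.single j j 1

/-- `CH_μ`: the convex hull of the weights of `μ`. -/
def CHmu (c : SC n) : Set (Matrix (Fin n) (Fin n) ℝ) :=
  convexHull ℝ {M | ∃ i j k : Fin n, i < j ∧ c i j k ≠ 0 ∧ M = Fwt i j k}

/-- The diagonal part of a matrix. -/
def diagPart (A : Matrix (Fin n) (Fin n) ℝ) : Matrix (Fin n) (Fin n) ℝ :=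
  Matrix.diagonal fun i => A i i

/-- Membership in `𝔱ⁿ_{>0}`, the diagonal matrices with positive diagonal entries. -/
def DiagPos (E : Matrix (Fin n) (Fin n) ℝ) : Prop :=
  ∃ d : Fin n → ℝ, (∀ i, 0 < d i) ∧ E = Matrix.diagonal d

/-- The basis is nice for the bracket `c`. -/
def IsNice (c : SC n) : Prop :=
  (∀ i j k l, c i j k ≠ 0 → c i j l ≠ 0 → k = l) ∧
  ∀ i j r s k, c i j k ≠ 0 → c r s k ≠ 0 →
    ({i, j} : Finset (Fin n)) = {r, s} ∨
      Disjoint ({i, j} : Finset (Fin n)) ({r, s} : Finset (Fin n))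

/-- `A` is diagonalizable over `ℝ`. -/
def IsDiagonalizableR {N : ℕ} (A : Matrix (Fin N) (Fin N) ℝ) : Prop :=
  ∃ g : GL (Fin N) ℝ, ∃ d : Fin N → ℝ,
    A = (g : Matrix (Fin N) (Fin N) ℝ) * Matrix.diagonal d
      * ((g⁻¹ : GL (Fin N) ℝ) : Matrix (Fin N) (Fin N) ℝ)

/-- `D` extended by zero to `𝔰_D = ℝf ⊕ 𝔫` (index `0` corresponds to `f`). -/
def Dext (D : Matrix (Fin n) (Fin n) ℝ) : Matrix (Fin (n + 1)) (Fin (n + 1)) ℝ :=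
  Matrix.of (Fin.cons (fun _ => (0 : ℝ)) (fun k => Fin.cons (0 : ℝ) (fun j => D k j)))

/-- The bracket of `𝔫` extended by zero to `𝔰_D = ℝf ⊕ 𝔫`. -/
def cext (c : SC n) : SC (n + 1) :=
  Fin.cons (fun _ _ => 0)
    (fun i => Fin.cons (fun _ => 0) (fun j => Fin.cons 0 (fun k => c i j k)))

/-- Structure constants of the solvable extension `𝔰_D = ℝf ⊕ 𝔫`, `[f,X] = D X`. -/
def solvSC (D : Matrix (Fin n) (Fin n) ℝ) (c : SC n) : SC (n + 1) :=
  fun i j k =>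
    (if i = 0 then Dext D k j else 0) - (if j = 0 then Dext D k i else 0) + cext c i j k

/-- The matrix of `ad X`. -/
def adM {N : ℕ} (γ : SC N) (X : Fin N → ℝ) : Matrix (Fin N) (Fin N) ℝ :=
  Matrix.of fun k j => ∑ i, X i * γ i j k

/-- The bilinear form with Gram matrix `P`. -/
def bip {N : ℕ} (P : Matrix (Fin N) (Fin N) ℝ) (x y : Fin N → ℝ) : ℝ :=
  dotProduct x (P.mulVec y)

/-- `⟨Ric X,Y⟩` computed via the orthonormal basis `u`:
`−½Σ⟨[X,uₐ],[Y,uₐ]⟩ + ¼ΣΣ⟨[uₐ,u_b],X⟩⟨[uₐ,u_b],Y⟩ − ½ tr(ad X ∘ ad Y)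
 − ½(⟨[H,X],Y⟩+⟨[H,Y],X⟩)`. -/
noncomputable def ricForm {N : ℕ} (γ : SC N) (P : Matrix (Fin N) (Fin N) ℝ)
    (u : Fin N → (Fin N → ℝ)) (H : Fin N → ℝ) (X Y : Fin N → ℝ) : ℝ :=
  -(1 / 2) * (∑ a, bip P (br γ X (u a)) (br γ Y (u a)))
    + (1 / 4) * (∑ a, ∑ b, bip P (br γ (u a) (u b)) X * bip P (br γ (u a) (u b)) Y)
    - (1 / 2) * Matrix.trace (adM γ X * adM γ Y)
    - (1 / 2) * (bip P (br γ H X) Y + bip P (br γ H Y) X)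

/-- `D` is a Ricci negative derivation of `𝔫`: the solvable extension `𝔰_D = ℝf ⊕ 𝔫`
admits an inner product (with Gram matrix `P`) such that `f ⟂ 𝔫`, `D` is symmetric,
and the Ricci operator is negative definite. -/
def IsRicciNegative (c : SC n) (D : Matrix (Fin n) (Fin n) ℝ) : Prop :=
  ∃ P : Matrix (Fin (n + 1)) (Fin (n + 1)) ℝ, P.PosDef ∧
    (∀ j : Fin n, P 0 j.succ = 0) ∧
    (Dext D).transpose * P = P * Dext D ∧
    ∃ u : Fin (n + 1) → (Fin (n + 1) → ℝ),
      (∀ a b, bip P (u a) (u b) = if a = b then 1 else 0) ∧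
      ∃ H : Fin (n + 1) → ℝ,
        (∀ X : Fin (n + 1) → ℝ, bip P H X = Matrix.trace (adM (solvSC D c) X)) ∧
        ∀ X : Fin (n + 1) → ℝ, X ≠ 0 → ricForm (solvSC D c) P u H X X < 0

/-- The bracket `[e_i,e_j] = v e_k` (and `[e_j,e_i] = −v e_k`) as an element of `V`. -/
def brk {N : ℕ} (i j k : Fin N) (v : ℝ) : SC N :=
  fun p q r =>
    if p = i ∧ q = j ∧ r = k then v else if p = j ∧ q = i ∧ r = k then -v else 0


/-- Example 4.2 (ex3): basis `X₁,…,X₅ = e₀,…,e₄`, `Y₁,…,Y₅ = e₅,…,e₉`, `Z = e₁₀`. -/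
def c14 : SC 11 :=
  brk 0 1 2 1 + brk 0 2 3 1 + brk 0 3 4 1 + brk 1 2 4 1 +
    brk 5 6 7 1 + brk 5 7 8 1 + brk 5 8 9 1 + brk 6 7 9 1 +
    brk 0 5 10 1 + brk 1 6 10 1

/-- `D(Xᵢ) = i Xᵢ`, `D(Yⱼ) = −j Yⱼ`, `D(Z) = 0`. -/
noncomputable def D14 : Matrix (Fin 11) (Fin 11) ℝ :=
  Matrix.diagonal ![1, 2, 3, 4, 5, -1, -2, -3, -4, -5, 0]

/-!
A diagonal matrix whose entries are additive along the nonzero structure constants is a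
derivation, and the weights `1, …, 5, -1, …, -5, 0` are additive along the ten brackets.
Conversely, since the basis is nice, comparing the `eₖ`-coefficients of `D [eᵢ, eⱼ]` shows that
the diagonal of every derivation is additive along the brackets. These ten relations leave one
degree of freedom: the diagonal is `D₀₀` times the weight vector, whose entries sum to `0`.
The weights are distinct, so a matrix commuting with `D14` is diagonal, hence equal to `D₀₀ • D14`.
-/

theorem _root_.Finset.eq_of_pair_eq_or_disjoint {α : Type*} [DecidableEq α] {p i j : α}
    (h : ({p, j} : Finset α) = {i, j} ∨ Disjoint ({p, j} : Finset α) {i, j}) : p = i := by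
  rcases h with h | h
  · have hp : p ∈ ({i, j} : Finset α) := h ▸ Finset.mem_insert_self p {j}
    have hi : i ∈ ({p, j} : Finset α) := h ▸ Finset.mem_insert_self i {j}
    simp only [Finset.mem_insert, Finset.mem_singleton] at hp hi
    rcases hp with hp | hp
    · exact hp
    · rcases hi with hi | hi <;> simp_all
  · exact absurd h (Finset.not_disjoint_iff.2 ⟨j, by simp, by simp⟩)

theorem _root_.Matrix.eq_diagonal_diag_of_mul_diagonal_comm {ι R : Type*} [Fintype ι]
    [DecidableEq ι] [CommRing R] [NoZeroDivisors R] {A : Matrix ι ι R} {d : ι → R}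
    (hd : Function.Injective d)
    (h : A * Matrix.diagonal d = Matrix.diagonal d * A) : A = Matrix.diagonal A.diag := by
  ext i j
  by_cases hij : i = j
  · subst hij; simp
  · have hA := congr_fun₂ h i j
    rw [Matrix.mul_diagonal, Matrix.diagonal_mul] at hA
    have hd' : d j - d i ≠ 0 := sub_ne_zero.2 fun e => hij (hd e).symm
    rw [Matrix.diagonal_apply_ne _ hij]
    exact (mul_eq_zero.1 (by rw [mul_sub, hA]; ring : A i j * (d j - d i) = 0)).resolve_right hd'

section StructureConstants

variable {c : SC n}

lemma isDeriv_diagonal {d : Fin n → ℝ} (hd : ∀ i j k, c i j k ≠ 0 → d k = d i + d j) :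
    IsDeriv c (Matrix.diagonal d) := by
  intro x y
  ext k
  simp only [br, Matrix.mulVec_diagonal, Pi.add_apply, Finset.mul_sum, ← Finset.sum_add_distrib]
  refine Finset.sum_congr rfl fun i _ => Finset.sum_congr rfl fun j _ => ?_
  by_cases hc : c i j k = 0
  · simp [hc]
  · rw [hd i j k hc]; ring

lemma IsDeriv.sum_mul_eq {D : Matrix (Fin n) (Fin n) ℝ} (hD : IsDeriv c D) (i j k : Fin n) :
    ∑ l, c i j l * D k l = ∑ p, c p j k * D p i + ∑ q, c i q k * D q j := by
  simpa [br, Matrix.mulVec, dotProduct, Pi.single_apply, mul_comm]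
    using congrFun (hD (Pi.single i 1) (Pi.single j 1)) k

lemma isNice_of_support_subset (S : Finset (Fin n × Fin n × Fin n))
    (hS : ∀ i j k, c i j k ≠ 0 → (i, j, k) ∈ S)
    (h₁ : ∀ t ∈ S, ∀ t' ∈ S, t.1 = t'.1 → t.2.1 = t'.2.1 → t.2.2 = t'.2.2)
    (h₂ : ∀ t ∈ S, ∀ t' ∈ S, t.2.2 = t'.2.2 →
      ({t.1, t.2.1} : Finset (Fin n)) = {t'.1, t'.2.1} ∨
        Disjoint ({t.1, t.2.1} : Finset (Fin n)) {t'.1, t'.2.1}) :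
    IsNice c :=
  ⟨fun i j k l hk hl => h₁ _ (hS i j k hk) _ (hS i j l hl) rfl rfl,
    fun i j r s k hk hr => h₂ _ (hS i j k hk) _ (hS r s k hr) rfl⟩

lemma IsNice.eq_left (hc : IsNice c) {p i j k : Fin n} (hp : c p j k ≠ 0) (hi : c i j k ≠ 0) :
    p = i :=
  Finset.eq_of_pair_eq_or_disjoint (hc.2 p j i j k hp hi)

lemma IsNice.eq_right (hc : IsNice c) {i q j k : Fin n} (hq : c i q k ≠ 0) (hj : c i j k ≠ 0) :
    q = j := by
  refine Finset.eq_of_pair_eq_or_disjoint (p := q) (i := j) (j := i) ?_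
  simpa only [Finset.pair_comm i] using hc.2 i q i j k hq hj

lemma IsDeriv.diag_eq_add_of_isNice {D : Matrix (Fin n) (Fin n) ℝ} (hD : IsDeriv c D)
    (hc : IsNice c) {i j k : Fin n} (hijk : c i j k ≠ 0) : D k k = D i i + D j j := by
  have hk : ∑ l, c i j l * D k l = c i j k * D k k :=
    Finset.sum_eq_single k (fun l _ hl =>
      mul_eq_zero_of_left (by_contra fun h => hl (hc.1 i j k l hijk h).symm) _) (by simp)
  have hi : ∑ p, c p j k * D p i = c i j k * D i i :=
    Finset.sum_eq_single i (fun p _ hp =>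
      mul_eq_zero_of_left (by_contra fun h => hp (hc.eq_left h hijk)) _) (by simp)
  have hj : ∑ q, c i q k * D q j = c i j k * D j j :=
    Finset.sum_eq_single j (fun q _ hq =>
      mul_eq_zero_of_left (by_contra fun h => hq (hc.eq_right h hijk)) _) (by simp)
  have h := hD.sum_mul_eq i j k
  rw [hk, hi, hj, ← mul_add] at h
  exact mul_left_cancel₀ hijk h

end StructureConstants

lemma brk_eq_zero_of_notMem {N : ℕ} {S : Finset (Fin N × Fin N × Fin N)} {i j k p q r : Fin N}
    (hi : (i, j, k) ∈ S) (hj : (j, i, k) ∈ S) (h : (p, q, r) ∉ S) (v : ℝ) :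
    brk i j k v p q r = 0 := by
  unfold brk
  split_ifs with h1 h2
  · obtain ⟨rfl, rfl, rfl⟩ := h1; exact absurd hi h
  · obtain ⟨rfl, rfl, rfl⟩ := h2; exact absurd hj h
  · rfl

def supp14 : Finset (Fin 11 × Fin 11 × Fin 11) :=
  {(0, 1, 2), (1, 0, 2), (0, 2, 3), (2, 0, 3), (0, 3, 4), (3, 0, 4), (1, 2, 4), (2, 1, 4),
    (5, 6, 7), (6, 5, 7), (5, 7, 8), (7, 5, 8), (5, 8, 9), (8, 5, 9), (6, 7, 9), (7, 6, 9),
    (0, 5, 10), (5, 0, 10), (1, 6, 10), (6, 1, 10)}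

lemma mem_supp14_of_ne_zero {i j k : Fin 11} (h : c14 i j k ≠ 0) : (i, j, k) ∈ supp14 := by
  by_contra hS
  refine h ?_
  simp (disch := decide) only [c14, Pi.add_apply, brk_eq_zero_of_notMem _ _ hS, add_zero]

lemma isNice_c14 : IsNice c14 :=
  isNice_of_support_subset supp14 (fun _ _ _ => mem_supp14_of_ne_zero)
    (by decide +kernel) (by decide +kernel)

noncomputable def wt14 : Fin 11 → ℝ := ![1, 2, 3, 4, 5, -1, -2, -3, -4, -5, 0]

lemma D14_eq : D14 = Matrix.diagonal wt14 := rfl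

lemma wt14_injective : Function.Injective wt14 := by
  intro i j h
  fin_cases i <;> fin_cases j <;> first | rfl | norm_num [wt14] at h

lemma wt14_add_of_mem_supp14 : ∀ t ∈ supp14, wt14 t.2.2 = wt14 t.1 + wt14 t.2.1 := by
  simp only [supp14, Finset.mem_insert, Finset.mem_singleton, forall_eq_or_imp, forall_eq]
  simp only [wt14, Matrix.cons_val]
  norm_num

lemma sum_wt14 : ∑ i, wt14 i = 0 := by
  norm_num [wt14, Fin.sum_univ_succ]

lemma isDeriv_c14_D14 : IsDeriv c14 D14 :=
  isDeriv_diagonal fun _ _ _ hijk => wt14_add_of_mem_supp14 _ (mem_supp14_of_ne_zero hijk)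

lemma IsDeriv.diag_c14 {D : Matrix (Fin 11) (Fin 11) ℝ} (hD : IsDeriv c14 D) :
    D.diag = D 0 0 • wt14 := by
  have h : ∀ i j k, c14 i j k ≠ 0 → D k k = D i i + D j j := fun _ _ _ hijk =>
    hD.diag_eq_add_of_isNice isNice_c14 hijk
  have h₀₁ := h 0 1 2 (by simp +decide [c14, brk])
  have h₀₂ := h 0 2 3 (by simp +decide [c14, brk])
  have h₀₃ := h 0 3 4 (by simp +decide [c14, brk])
  have h₁₂ := h 1 2 4 (by simp +decide [c14, brk])
  have h₅₆ := h 5 6 7 (by simp +decide [c14, brk])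
  have h₅₇ := h 5 7 8 (by simp +decide [c14, brk])
  have h₅₈ := h 5 8 9 (by simp +decide [c14, brk])
  have h₆₇ := h 6 7 9 (by simp +decide [c14, brk])
  have h₀₅ := h 0 5 10 (by simp +decide [c14, brk])
  have h₁₆ := h 1 6 10 (by simp +decide [c14, brk])
  ext i
  rw [Matrix.diag_apply, Pi.smul_apply, smul_eq_mul]
  fin_cases i <;> simp only [wt14, Fin.reduceFinMk, Fin.isValue, Matrix.cons_val] <;> linarith

theorem statement14 :
    (IsDeriv c14 D14 ∧ D14 ≠ 0 ∧ IsDiagonalizableR D14) ∧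
    (∀ D' : Matrix (Fin 11) (Fin 11) ℝ, IsDeriv c14 D' → D'.trace = 0) ∧
    (∀ D' : Matrix (Fin 11) (Fin 11) ℝ, IsDeriv c14 D' → IsDiagonalizableR D' →
      D' * D14 = D14 * D' → ∃ t : ℝ, D' = t • D14) := by
  refine ⟨⟨isDeriv_c14_D14, ?_, ⟨1, wt14, by simp [D14_eq]⟩⟩, ?_, ?_⟩
  · intro h
    simpa [D14_eq, wt14] using congr_fun₂ h 0 0
  · intro D' hD'
    simp only [Matrix.trace, hD'.diag_c14, Pi.smul_apply, smul_eq_mul, ← Finset.mul_sum, sum_wt14,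
      mul_zero]
  · intro D' hD' _ hcomm
    have hdiag := Matrix.eq_diagonal_diag_of_mul_diagonal_comm wt14_injective hcomm
    rw [hD'.diag_c14, Matrix.diagonal_smul] at hdiag
    exact ⟨D' 0 0, hdiag⟩

end RNPaper
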